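/- Let A(t) be an n×n real matrix function of class C¹ on [a,b] with det A(t) ≠ 0 for t ∈ (a,b). Suppose det A(a) ≠ 0, det A(b) = 0, and there exist a nonzero real h_b and a positive integer ν_b such that det A(b+t) = h_b |t|^{ν_b} + o(|t|^{ν_b}) as t → 0−. Fix α > 0, γ > 0, κ > 0. Then there exists λ > 0, depending only on A, α, γ and κ, such that for every continuous ℝⁿ-valued function r on [a,b] satisfying ‖r‖_{i,a,b} ≥ α‖r‖_{a,b} and |A(t)r(t)| ≤ κ(b−t)^{ν_b} ‖r‖_{a,b} for t ∈ (b−γ, b], one has ‖Ar‖_{i,a,b} ≥ λ‖r‖_{i,a,b}. -/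

import Mathlib

/-! Away from `b` the matrix `A(t)` is invertible, so on `[a, b - δ]` the inverse is bounded
and `|r| ≤ D |A r|` pointwise. On the remaining interval `[b - δ, b]` the integral of `|r|` is
at most `δ ‖r‖_{a,b}`, which is at most half of `‖r‖_{i,a,b}` once `δ ≤ α / 2`. Hence
`‖r‖_{i,a,b} ≤ 2 D ‖A r‖_{i,a,b}`. -/

open Set Filter Asymptotics Topology MeasureTheory

/-- Euclidean norm of a vector in `ℝⁿ`. -/
noncomputable def euclNorm {n : ℕ} (v : Fin n → ℝ) : ℝ := Real.sqrt (∑ i, v i ^ 2)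

/-- `‖q‖_{a,b} = max_{t ∈ [a,b]} |q(t)|`. -/
noncomputable def supNorm {n : ℕ} (a b : ℝ) (q : ℝ → Fin n → ℝ) : ℝ :=
  sSup ((fun t => euclNorm (q t)) '' Set.Icc a b)

/-- `‖q‖_{i,a,b} = ∫_a^b |q(t)| dt`. -/
noncomputable def intNorm {n : ℕ} (a b : ℝ) (q : ℝ → Fin n → ℝ) : ℝ :=
  ∫ t in a..b, euclNorm (q t)

open scoped Matrix Matrix.Norms.L2Operator

lemma euclNorm_eq_norm {n : ℕ} (v : Fin n → ℝ) :
    euclNorm v = ‖(EuclideanSpace.equiv (Fin n) ℝ).symm v‖ := by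
  simp [euclNorm, EuclideanSpace.norm_eq, Real.norm_eq_abs, sq_abs]

lemma euclNorm_nonneg {n : ℕ} (v : Fin n → ℝ) : 0 ≤ euclNorm v := Real.sqrt_nonneg _

lemma continuous_euclNorm {n : ℕ} : Continuous (euclNorm (n := n)) := by
  simp only [funext euclNorm_eq_norm]
  fun_prop

lemma euclNorm_mulVec_le {n : ℕ} (M : Matrix (Fin n) (Fin n) ℝ) (v : Fin n → ℝ) :
    euclNorm (M *ᵥ v) ≤ ‖M‖ * euclNorm v := by
  rw [euclNorm_eq_norm, euclNorm_eq_norm]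
  exact M.l2_opNorm_mulVec _

lemma euclNorm_le_supNorm {n : ℕ} {a b : ℝ} {r : ℝ → Fin n → ℝ}
    (hr : ContinuousOn r (Icc a b)) {t : ℝ} (ht : t ∈ Icc a b) :
    euclNorm (r t) ≤ supNorm a b r :=
  le_csSup
    (isCompact_Icc.image_of_continuousOn (continuous_euclNorm.comp_continuousOn hr)).bddAbove
    ⟨t, ht, rfl⟩

lemma ContinuousOn.matrix_inv {X m : Type*} [TopologicalSpace X] [Fintype m] [DecidableEq m]
    {K : Set X} {A : X → Matrix m m ℝ} (hA : ContinuousOn A K)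
    (hdet : ∀ t ∈ K, (A t).det ≠ 0) : ContinuousOn (fun t => (A t)⁻¹) K := fun t ht =>
  (continuousAt_matrix_inv (A t) (by
    simpa only [Ring.inverse_eq_inv'] using continuousAt_inv₀ (hdet t ht))
    ).comp_continuousWithinAt (hA t ht)

lemma IsCompact.exists_euclNorm_le_mul_euclNorm_mulVec {X : Type*} [TopologicalSpace X] {n : ℕ}
    {K : Set X} (hK : IsCompact K) {A : X → Matrix (Fin n) (Fin n) ℝ} (hA : ContinuousOn A K)
    (hdet : ∀ t ∈ K, (A t).det ≠ 0) :
    ∃ D > 0, ∀ t ∈ K, ∀ v, euclNorm v ≤ D * euclNorm (A t *ᵥ v) := by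
  obtain ⟨C, hC⟩ := hK.exists_bound_of_continuousOn (hA.matrix_inv hdet)
  refine ⟨max C 1, by positivity, fun t ht v => ?_⟩
  have hv : (A t)⁻¹ *ᵥ (A t *ᵥ v) = v := by
    rw [Matrix.mulVec_mulVec, Matrix.nonsing_inv_mul _ (isUnit_iff_ne_zero.2 (hdet t ht)),
      Matrix.one_mulVec]
  calc euclNorm v = euclNorm ((A t)⁻¹ *ᵥ (A t *ᵥ v)) := by rw [hv]
    _ ≤ ‖(A t)⁻¹‖ * euclNorm (A t *ᵥ v) := euclNorm_mulVec_le _ _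
    _ ≤ max C 1 * euclNorm (A t *ᵥ v) :=
      mul_le_mul_of_nonneg_right ((hC t ht).trans (le_max_left _ _)) (euclNorm_nonneg _)

lemma integral_le_two_mul_integral_of_le_mul_of_tail_le {f g : ℝ → ℝ} {a c b D S : ℝ}
    (hac : a ≤ c) (hcb : c ≤ b) (hD : 0 ≤ D)
    (hf : IntervalIntegrable f volume a b) (hg : IntervalIntegrable g volume a b)
    (hg0 : ∀ t ∈ Icc a b, 0 ≤ g t) (hfg : ∀ t ∈ Icc a c, f t ≤ D * g t)
    (hfS : ∀ t ∈ Icc c b, f t ≤ S) (hS : 2 * ((b - c) * S) ≤ ∫ t in a..b, f t) :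
    ∫ t in a..b, f t ≤ 2 * D * ∫ t in a..b, g t := by
  have hsub₁ : uIcc a c ⊆ uIcc a b := by
    rw [uIcc_of_le hac, uIcc_of_le (hac.trans hcb)]; exact Icc_subset_Icc_right hcb
  have hsub₂ : uIcc c b ⊆ uIcc a b := by
    rw [uIcc_of_le hcb, uIcc_of_le (hac.trans hcb)]; exact Icc_subset_Icc_left hac
  have head : ∫ t in a..c, f t ≤ D * ∫ t in a..b, g t :=
    calc ∫ t in a..c, f t ≤ ∫ t in a..c, D * g t :=
          intervalIntegral.integral_mono_on hac (hf.mono_set hsub₁)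
            ((hg.mono_set hsub₁).const_mul D) hfg
      _ = D * ∫ t in a..c, g t := intervalIntegral.integral_const_mul _ _
      _ ≤ D * ∫ t in a..b, g t := by
        gcongr
        exact intervalIntegral.integral_mono_interval le_rfl hac hcb
          ((ae_restrict_mem measurableSet_Ioc).mono fun t ht => hg0 t (Ioc_subset_Icc_self ht)) hg
  have tail : ∫ t in c..b, f t ≤ (b - c) * S := by
    simpa using intervalIntegral.integral_mono_on hcb (hf.mono_set hsub₂)
      intervalIntegrable_const hfS
  rw [← intervalIntegral.integral_add_adjacent_intervals (hf.mono_set hsub₁)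
    (hf.mono_set hsub₂)] at hS ⊢
  linarith

theorem stmt3_general (n : ℕ) (a b : ℝ) (hab : a < b)
    (A : ℝ → Matrix (Fin n) (Fin n) ℝ)
    (hA : ∀ i j, ContDiffOn ℝ 1 (fun t => A t i j) (Set.Icc a b))
    (hdet : ∀ t ∈ Set.Ioo a b, (A t).det ≠ 0)
    (hdeta : (A a).det ≠ 0)
    (νb : ℕ)
    (α γ κ : ℝ) (hα : 0 < α) :
    ∃ lam > 0, ∀ r : ℝ → Fin n → ℝ, ContinuousOn r (Set.Icc a b) →
      intNorm a b r ≥ α * supNorm a b r →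
      (∀ t, b - γ < t → t ≤ b → a ≤ t →
        euclNorm ((A t).mulVec (r t)) ≤ κ * (b - t) ^ νb * supNorm a b r) →
      (∫ t in a..b, euclNorm ((A t).mulVec (r t))) ≥ lam * intNorm a b r := by
  have hAc : ContinuousOn A (Icc a b) :=
    continuousOn_pi.2 fun i => continuousOn_pi.2 fun j => (hA i j).continuousOn
  set δ := min (α / 2) ((b - a) / 2)
  have hδ : 0 < δ := lt_min (by linarith) (by linarith)
  have hδα : 2 * δ ≤ α := by linarith [min_le_left (α / 2) ((b - a) / 2)]
  have hc : a < b - δ := by linarith [min_le_right (α / 2) ((b - a) / 2)]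
  have hdetc : ∀ t ∈ Icc a (b - δ), (A t).det ≠ 0 := fun t ht =>
    ht.1.eq_or_lt.elim (fun h => h ▸ hdeta) fun h => hdet t ⟨h, by linarith [ht.2]⟩
  obtain ⟨D, hD, hDr⟩ := IsCompact.exists_euclNorm_le_mul_euclNorm_mulVec isCompact_Icc
    (hAc.mono (Icc_subset_Icc_right (by linarith))) hdetc
  refine ⟨(2 * D)⁻¹, by positivity, fun r hr hrα _ => ?_⟩
  have hArc : ContinuousOn (fun t => A t *ᵥ r t) (Icc a b) :=
    (continuous_fst.matrix_mulVec continuous_snd).comp_continuousOn (hAc.prodMk hr)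
  have hS : 0 ≤ supNorm a b r :=
    (euclNorm_nonneg _).trans (euclNorm_le_supNorm hr ⟨le_rfl, hab.le⟩)
  have key := integral_le_two_mul_integral_of_le_mul_of_tail_le (S := supNorm a b r)
    hc.le (by linarith) hD.le
    ((continuous_euclNorm.comp_continuousOn hr).intervalIntegrable_of_Icc hab.le)
    ((continuous_euclNorm.comp_continuousOn hArc).intervalIntegrable_of_Icc hab.le)
    (fun t _ => euclNorm_nonneg _) (fun t ht => hDr t ht (r t))
    (fun t ht => euclNorm_le_supNorm hr ⟨by linarith [ht.1], ht.2⟩)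
    (le_trans (by rw [sub_sub_cancel, ← mul_assoc]; exact mul_le_mul_of_nonneg_right hδα hS)
      hrα)
  rw [ge_iff_le, inv_mul_le_iff₀ (by positivity)]
  exact key

theorem stmt3 (n : ℕ) (a b : ℝ) (hab : a < b)
    (A : ℝ → Matrix (Fin n) (Fin n) ℝ)
    (hA : ∀ i j, ContDiffOn ℝ 1 (fun t => A t i j) (Set.Icc a b))
    (hdet : ∀ t ∈ Set.Ioo a b, (A t).det ≠ 0)
    (hdeta : (A a).det ≠ 0) (hdetb : (A b).det = 0)
    (hb : ℝ) (hhb : hb ≠ 0) (νb : ℕ) (hνb : 0 < νb)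
    (hasymb : (fun t => (A (b + t)).det - hb * |t| ^ νb) =o[𝓝[<] (0 : ℝ)] fun t => |t| ^ νb)
    (α γ κ : ℝ) (hα : 0 < α) (hγ : 0 < γ) (hκ : 0 < κ) :
    ∃ lam > 0, ∀ r : ℝ → Fin n → ℝ, ContinuousOn r (Set.Icc a b) →
      intNorm a b r ≥ α * supNorm a b r →
      (∀ t, b - γ < t → t ≤ b → a ≤ t →
        euclNorm ((A t).mulVec (r t)) ≤ κ * (b - t) ^ νb * supNorm a b r) →
      (∫ t in a..b, euclNorm ((A t).mulVec (r t))) ≥ lam * intNorm a b r :=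
  stmt3_general n a b hab A hA hdet hdeta νb α γ κ hα
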